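/- arXiv:2602.12369 — 5 statements merged into one kernel-verified Lean document; each statement's English description precedes it below -/
import Mathlib

section
/- Let S and T be finite totally ordered sets and K : S × T → (0,∞) a TP2 kernel. If m, m' : T → (0,∞) satisfy the monotone likelihood ratio order (t ↦ m'(t)/m(t) is monotone increasing), then the transformed vectors (Km)(s) = Σ_t K(s,t)m(t) and (Km')(s) = Σ_t K(s,t)m'(t) also satisfy the MLR order: s ↦ (Km')(s)/(Km)(s) is monotone increasing. -/
theorem stmt_3 {S T : Type*} [Fintype S] [Fintype T] [LinearOrder S] [LinearOrder T]
    (K : S → T → ℝ) (hKpos : ∀ s t, 0 < K s t)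
    (hTP2 : ∀ s1 s2 : S, ∀ t1 t2 : T, s1 < s2 → t1 < t2 →
      K s1 t2 * K s2 t1 ≤ K s1 t1 * K s2 t2)
    (m m' : T → ℝ) (hm : ∀ t, 0 < m t) (hm' : ∀ t, 0 < m' t)
    (hMLR : Monotone fun t => m' t / m t) :
    Monotone fun s => (∑ t, K s t * m' t) / (∑ t, K s t * m t) := by
  rcases isEmpty_or_nonempty T with hT | hT
  · intro s1 s2 _
    simp
  intro s1 s2 hs
  rcases eq_or_lt_of_le hs with rfl | hlt
  · exact le_refl _
  simp only
  have hden1 : 0 < ∑ t, K s1 t * m t :=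
    Finset.sum_pos (fun t _ => mul_pos (hKpos _ _) (hm _)) Finset.univ_nonempty
  have hden2 : 0 < ∑ t, K s2 t * m t :=
    Finset.sum_pos (fun t _ => mul_pos (hKpos _ _) (hm _)) Finset.univ_nonempty
  rw [div_le_div_iff₀ hden1 hden2]
  set A : T → T → ℝ := fun t u => K s1 t * m' t * (K s2 u * m u) with hA
  set B : T → T → ℝ := fun t u => K s2 t * m' t * (K s1 u * m u) with hB
  have hLHS : (∑ t, K s1 t * m' t) * (∑ t, K s2 t * m t) = ∑ t, ∑ u, A t u := by
    rw [Finset.sum_mul_sum]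
  have hRHS : (∑ t, K s2 t * m' t) * (∑ t, K s1 t * m t) = ∑ t, ∑ u, B t u := by
    rw [Finset.sum_mul_sum]
  rw [hLHS, hRHS]
  have key : ∀ t u, A t u + A u t ≤ B t u + B u t := by
    have main : ∀ t u : T, t < u → A t u + A u t ≤ B t u + B u t := by
      intro t u htu
      have h1 : m t * m' u - m' t * m u ≥ 0 := by
        have := hMLR htu.le
        simp only at this
        rw [div_le_div_iff₀ (hm t) (hm u)] at this
        nlinarith
      have h2 : K s1 u * K s2 t ≤ K s1 t * K s2 u := hTP2 s1 s2 t u hlt htu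
      simp only [hA, hB]
      nlinarith [(hm t).le, (hm u).le, (hm' t).le, (hm' u).le, (hKpos s1 t).le,
        (hKpos s1 u).le, (hKpos s2 t).le, (hKpos s2 u).le]
    intro t u
    rcases lt_trichotomy t u with h | rfl | h
    · exact main t u h
    · simp only [hA, hB]; ring_nf; rfl
    · have := main u t h
      linarith
  have hcA : (∑ t, ∑ u, A t u) = ∑ t, ∑ u, A u t := Finset.sum_comm
  have hcB : (∑ t, ∑ u, B t u) = ∑ t, ∑ u, B u t := Finset.sum_comm
  have hsum : ∑ t, ∑ u, (A t u + A u t) ≤ ∑ t, ∑ u, (B t u + B u t) :=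
    Finset.sum_le_sum fun t _ => Finset.sum_le_sum fun u _ => key t u
  simp only [Finset.sum_add_distrib] at hsum
  linarith
end

section
/- For strictly positive vectors m, m' on a finite totally ordered set T and a TP2 kernel K, the difference (Km')(s2)(Km)(s1) − (Km')(s1)(Km)(s2) equals Σ_{t>u} [K(s2,t)K(s1,u) − K(s1,t)K(s2,u)]·[m'(t)m(u) − m'(u)m(t)], for any s1 < s2. -/
theorem stmt_4 {S T : Type*} [Fintype T] [LinearOrder S] [LinearOrder T]
    (K : S → T → ℝ) (m m' : T → ℝ) (s1 s2 : S) (hs : s1 < s2) :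
    (∑ t, K s2 t * m' t) * (∑ u, K s1 u * m u) -
      (∑ t, K s1 t * m' t) * (∑ u, K s2 u * m u) =
    ∑ t, ∑ u ∈ Finset.univ.filter (fun u => u < t),
      (K s2 t * K s1 u - K s1 t * K s2 u) * (m' t * m u - m' u * m t) := by
  classical
  set g : T → T → ℝ := fun t u =>
    K s2 t * m' t * (K s1 u * m u) - K s1 t * m' t * (K s2 u * m u) with hg
  have lhs : (∑ t, K s2 t * m' t) * (∑ u, K s1 u * m u) -
      (∑ t, K s1 t * m' t) * (∑ u, K s2 u * m u) = ∑ t, ∑ u, g t u := by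
    simp only [hg, Finset.sum_sub_distrib, Finset.sum_mul, Finset.mul_sum]
    congr 1 <;> exact Finset.sum_comm
  rw [lhs]
  have split : ∀ t : T, (Finset.univ : Finset T) =
      (Finset.univ.filter (fun u => u < t)) ∪ (Finset.univ.filter (fun u => ¬ u < t)) := by
    intro t
    rw [Finset.filter_union_filter_not_eq]
  have step : ∀ t, (∑ u, g t u) =
      (∑ u ∈ Finset.univ.filter (fun u => u < t), g t u) +
      (∑ u ∈ Finset.univ.filter (fun u => t < u), g t u) := by
    intro t
    rw [← Finset.sum_filter_add_sum_filter_not Finset.univ (fun u => u < t)]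
    congr 1
    have : Finset.univ.filter (fun u => ¬ u < t) =
        insert t (Finset.univ.filter (fun u => t < u)) := by
      ext u
      simp [not_lt, le_iff_lt_or_eq, or_comm, eq_comm]
    rw [this, Finset.sum_insert (by simp)]
    have : g t t = 0 := by simp [hg]; ring
    rw [this, zero_add]
  have swap : (∑ t, ∑ u ∈ Finset.univ.filter (fun u => t < u), g t u) =
      ∑ t, ∑ u ∈ Finset.univ.filter (fun u => u < t), g u t := by
    exact Finset.sum_comm' (by intro x y; simp)
  calc ∑ t, ∑ u, g t u
      = ∑ t, ((∑ u ∈ Finset.univ.filter (fun u => u < t), g t u) +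
        (∑ u ∈ Finset.univ.filter (fun u => t < u), g t u)) := by
        exact Finset.sum_congr rfl fun t _ => step t
    _ = (∑ t, ∑ u ∈ Finset.univ.filter (fun u => u < t), g t u) +
        (∑ t, ∑ u ∈ Finset.univ.filter (fun u => t < u), g t u) := Finset.sum_add_distrib
    _ = ∑ t, ∑ u ∈ Finset.univ.filter (fun u => u < t), (g t u + g u t) := by
        rw [swap, ← Finset.sum_add_distrib]
        exact Finset.sum_congr rfl fun t _ => Finset.sum_add_distrib.symm
    _ = ∑ t, ∑ u ∈ Finset.univ.filter (fun u => u < t),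
        (K s2 t * K s1 u - K s1 t * K s2 u) * (m' t * m u - m' u * m t) := by
        refine Finset.sum_congr rfl fun t _ => Finset.sum_congr rfl fun u _ => ?_
        simp only [hg]; ring
end

section
/- If for every edge of a finite graph the edge kernel K_{xy} is TP2 and single-site weights a_x are strictly positive, then the product weight w(σ) = Π_{edges} K_{xy}(σ(x),σ(y)) · Π_{vertices} a_x(σ(x)) satisfies the FKG lattice condition: w(σ ∧ τ)·w(σ ∨ τ) ≥ w(σ)·w(τ) for all configurations σ, τ, where ∧ and ∨ are pointwise min and max. -/
theorem stmt_5 {V : Type*} [Fintype V] (E : Finset (V × V))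
    (K : V × V → ℝ → ℝ → ℝ) (a : V → ℝ → ℝ)
    (hKpos : ∀ e ∈ E, ∀ s t : ℝ, 0 < K e s t)
    (hTP2 : ∀ e ∈ E, ∀ s1 s2 t1 t2 : ℝ, s1 ≤ s2 → t1 ≤ t2 →
      K e s1 t2 * K e s2 t1 ≤ K e s1 t1 * K e s2 t2)
    (ha : ∀ x : V, ∀ s : ℝ, 0 < a x s)
    (w : (V → ℝ) → ℝ)
    (hw : ∀ σ : V → ℝ, w σ = (∏ e ∈ E, K e (σ e.1) (σ e.2)) * ∏ x, a x (σ x))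
    (σ τ : V → ℝ) :
    w σ * w τ ≤ w (fun x => min (σ x) (τ x)) * w (fun x => max (σ x) (τ x)) := by
  rw [hw, hw, hw, hw]
  have haeq : (∏ x, a x (σ x)) * ∏ x, a x (τ x)
      = (∏ x, a x (min (σ x) (τ x))) * ∏ x, a x (max (σ x) (τ x)) := by
    rw [← Finset.prod_mul_distrib, ← Finset.prod_mul_distrib]
    refine Finset.prod_congr rfl fun x _ => ?_
    rcases le_total (σ x) (τ x) with h | h <;>
      simp [min_eq_left, max_eq_right, min_eq_right, max_eq_left, h, mul_comm]
  have hK : (∏ e ∈ E, K e (σ e.1) (σ e.2)) * ∏ e ∈ E, K e (τ e.1) (τ e.2)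
      ≤ (∏ e ∈ E, K e (min (σ e.1) (τ e.1)) (min (σ e.2) (τ e.2))) *
        ∏ e ∈ E, K e (max (σ e.1) (τ e.1)) (max (σ e.2) (τ e.2)) := by
    rw [← Finset.prod_mul_distrib, ← Finset.prod_mul_distrib]
    refine Finset.prod_le_prod (fun e he => ?_) (fun e he => ?_)
    · exact le_of_lt (mul_pos (hKpos e he _ _) (hKpos e he _ _))
    · rcases le_total (σ e.1) (τ e.1) with h1 | h1 <;>
        rcases le_total (σ e.2) (τ e.2) with h2 | h2
      · simp only [min_eq_left h1, max_eq_right h1, min_eq_left h2, max_eq_right h2, le_refl]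
      · simp only [min_eq_left h1, max_eq_right h1, min_eq_right h2, max_eq_left h2]
        exact hTP2 e he _ _ _ _ h1 h2
      · simp only [min_eq_right h1, max_eq_left h1, min_eq_left h2, max_eq_right h2]
        rw [mul_comm]
        exact hTP2 e he _ _ _ _ h1 h2
      · simp only [min_eq_right h1, max_eq_left h1, min_eq_right h2, max_eq_left h2]
        rw [mul_comm]
  have hapos : 0 ≤ (∏ x, a x (σ x)) * ∏ x, a x (τ x) :=
    le_of_lt (mul_pos (Finset.prod_pos fun x _ => ha x _)
      (Finset.prod_pos fun x _ => ha x _))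
  calc (∏ e ∈ E, K e (σ e.1) (σ e.2)) * (∏ x, a x (σ x)) *
        ((∏ e ∈ E, K e (τ e.1) (τ e.2)) * ∏ x, a x (τ x))
      = ((∏ e ∈ E, K e (σ e.1) (σ e.2)) * ∏ e ∈ E, K e (τ e.1) (τ e.2)) *
        ((∏ x, a x (σ x)) * ∏ x, a x (τ x)) := by ring
    _ ≤ ((∏ e ∈ E, K e (min (σ e.1) (τ e.1)) (min (σ e.2) (τ e.2))) *
        ∏ e ∈ E, K e (max (σ e.1) (τ e.1)) (max (σ e.2) (τ e.2))) *
        ((∏ x, a x (σ x)) * ∏ x, a x (τ x)) := by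
        exact mul_le_mul_of_nonneg_right hK hapos
    _ = _ := by rw [haeq]; ring
end

section
/- Let (X, ≤) be a finite partially ordered configuration space that is a distributive lattice, and let w, w', defined as strictly positive weights on X, satisfy Holley's condition w'(σ ∨ τ)·w(σ ∧ τ) ≥ w(σ)·w'(τ) for all σ, τ ∈ X. Then the probability measure μ' proportional to w' stochastically dominates the measure μ proportional to w: for every monotone increasing f : X → ℝ, E_{μ}[f] ≤ E_{μ'}[f]. -/
theorem stmt_16 {X : Type*} [Fintype X] [Nonempty X] [DistribLattice X]
    (w w' : X → ℝ) (hw : ∀ σ, 0 < w σ) (hw' : ∀ σ, 0 < w' σ)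
    (hHolley : ∀ σ τ : X, w σ * w' τ ≤ w' (σ ⊔ τ) * w (σ ⊓ τ))
    (f : X → ℝ) (hf : Monotone f) :
    (∑ σ, w σ * f σ) / (∑ σ, w σ) ≤ (∑ σ, w' σ * f σ) / (∑ σ, w' σ) := by
  classical
  have hW : (0:ℝ) < ∑ σ, w σ := Finset.sum_pos (fun i _ => hw i) Finset.univ_nonempty
  have hW' : (0:ℝ) < ∑ σ, w' σ := Finset.sum_pos (fun i _ => hw' i) Finset.univ_nonempty
  obtain ⟨a₀, -, ha₀⟩ := Finset.exists_min_image Finset.univ f Finset.univ_nonempty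
  set g : X → ℝ := fun a => f a - f a₀ with hg
  have hkey := holley (μ := g) (f := fun a => w a / ∑ σ, w σ)
      (g := fun a => w' a / ∑ σ, w' σ)
      (fun a => sub_nonneg.2 (ha₀ a (Finset.mem_univ a)))
      (fun a => div_nonneg (hw a).le hW.le)
      (fun a => div_nonneg (hw' a).le hW'.le)
      (fun a b hab => sub_le_sub_right (hf hab) _)
      (by rw [← Finset.sum_div, ← Finset.sum_div, div_self hW.ne', div_self hW'.ne'])
      (by
        intro a b
        rw [div_mul_div_comm, div_mul_div_comm]
        apply div_le_div_of_nonneg_right ?_ (by positivity)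
        calc w a * w' b ≤ w' (a ⊔ b) * w (a ⊓ b) := hHolley a b
          _ = w (a ⊓ b) * w' (a ⊔ b) := mul_comm _ _)
  have expand : ∀ (v : X → ℝ), (0:ℝ) < ∑ σ, v σ →
      ∑ a, g a * (v a / ∑ σ, v σ) = (∑ σ, v σ * f σ) / (∑ σ, v σ) - f a₀ := by
    intro v hv
    have : ∑ a, g a * (v a / ∑ σ, v σ)
        = (∑ a, (v a * f a) / ∑ σ, v σ) - ∑ a, f a₀ * (v a / ∑ σ, v σ) := by
      rw [← Finset.sum_sub_distrib]
      congr 1 with a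
      simp [hg]; ring
    rw [this, ← Finset.sum_div, ← Finset.mul_sum, ← Finset.sum_div, div_self hv.ne', mul_one]
  rw [expand w hW, expand w' hW'] at hkey
  linarith
end

section
/- If weights w on a finite distributive lattice satisfy the FKG lattice condition w(σ∨τ)·w(σ∧τ) ≥ w(σ)·w(τ) for all σ, τ, then the associated probability measure μ ∝ w is positively associated: for all increasing functions f, g : X → ℝ, E_μ[fg] ≥ E_μ[f]·E_μ[g]. -/
theorem stmt_17 {X : Type*} [Fintype X] [Nonempty X] [DistribLattice X]
    (w : X → ℝ) (hw : ∀ σ, 0 < w σ)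
    (hFKG : ∀ σ τ : X, w σ * w τ ≤ w (σ ⊔ τ) * w (σ ⊓ τ))
    (f g : X → ℝ) (hf : Monotone f) (hg : Monotone g) :
    ((∑ σ, w σ * f σ) / (∑ σ, w σ)) * ((∑ σ, w σ * g σ) / (∑ σ, w σ)) ≤
      (∑ σ, w σ * (f σ * g σ)) / (∑ σ, w σ) := by
  classical
  have hS : (0:ℝ) < ∑ σ, w σ := Finset.sum_pos (fun σ _ ↦ hw σ) Finset.univ_nonempty
  set a : ℝ := -(Finset.univ.inf' Finset.univ_nonempty f) with ha
  set b : ℝ := -(Finset.univ.inf' Finset.univ_nonempty g) with hb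
  have hF0 : 0 ≤ fun σ ↦ f σ + a := fun σ ↦ by
    have := Finset.inf'_le f (Finset.mem_univ σ)
    show 0 ≤ f σ + a
    rw [ha]; linarith
  have hG0 : 0 ≤ fun σ ↦ g σ + b := fun σ ↦ by
    have := Finset.inf'_le g (Finset.mem_univ σ)
    show 0 ≤ g σ + b
    rw [hb]; linarith
  have key := fkg (fun σ ↦ f σ + a) (fun σ ↦ g σ + b) w
    (fun σ ↦ (hw σ).le) hF0 hG0
    (fun x y hxy ↦ by simpa using hf hxy)
    (fun x y hxy ↦ by simpa using hg hxy)
    (fun x y ↦ by rw [mul_comm (w (x ⊓ y))]; exact hFKG x y)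
  set A := ∑ σ, w σ * f σ
  set B := ∑ σ, w σ * g σ
  set C := ∑ σ, w σ * (f σ * g σ)
  set S := ∑ σ, w σ
  have e1 : ∑ σ, w σ * (f σ + a) = A + a * S := by
    simp [A, S, mul_add, Finset.sum_add_distrib, ← Finset.sum_mul, mul_comm]
  have e2 : ∑ σ, w σ * (g σ + b) = B + b * S := by
    simp [B, S, mul_add, Finset.sum_add_distrib, ← Finset.sum_mul, mul_comm]
  have e3 : ∑ σ, w σ * ((f σ + a) * (g σ + b)) = C + b * A + a * B + a * b * S := by
    simp only [C, A, B, S, ← Finset.sum_add_distrib, Finset.mul_sum]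
    apply Finset.sum_congr rfl
    intro σ _; ring
  rw [e1, e2, e3] at key
  have hAB : A * B ≤ S * C := by nlinarith [key]
  rw [div_mul_div_comm, div_le_div_iff₀ (by positivity) hS]
  nlinarith [hAB, hS]
end
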